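/- arXiv:2105.13707 — 2 statements merged into one kernel-verified Lean document; each statement's English description precedes it below -/
import Mathlib

section
/- Let G be a graph of order n ≥ 28 such that neither G nor its complement is the empty graph (both contain at least one edge). Then α'(G) + α'(complement of G) ≥ (n+1)/2, with equality if and only if G or its complement is isomorphic to the star K_{1,n−1}. -/
open Finset
open scoped Classical

noncomputable section

/-- A fractional matching of a simple graph `G`: a weight on `Sym2 V` supported on the
edge set, with values in `[0,1]`, such that the total weight at each vertex is at most 1. -/
def SimpleGraph.IsFracMatching {V : Type*} [Fintype V] (G : SimpleGraph V)
    (f : Sym2 V → ℝ) : Prop :=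
  (∀ e, 0 ≤ f e ∧ f e ≤ 1) ∧ (∀ e, e ∉ G.edgeSet → f e = 0) ∧
    ∀ v : V, ∑ e ∈ G.incidenceFinset v, f e ≤ 1

/-- The total weight `f(G)` of a fractional matching. -/
def SimpleGraph.fracWeight {V : Type*} [Fintype V] (G : SimpleGraph V)
    (f : Sym2 V → ℝ) : ℝ :=
  ∑ e ∈ G.edgeFinset, f e

/-- The weight `f(v)` of a vertex: the sum over edges incident to `v`. -/
def SimpleGraph.vertexWeight {V : Type*} [Fintype V] (G : SimpleGraph V)
    (f : Sym2 V → ℝ) (v : V) : ℝ :=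
  ∑ e ∈ G.incidenceFinset v, f e

/-- The fractional matching number `α'(G)`. -/
def SimpleGraph.fracNu {V : Type*} [Fintype V] (G : SimpleGraph V) : ℝ :=
  sSup {x : ℝ | ∃ f, G.IsFracMatching f ∧ G.fracWeight f = x}

end

namespace FracNG

open SimpleGraph

variable {V : Type*} [Fintype V]

lemma zero_isFM (G : SimpleGraph V) : G.IsFracMatching (fun _ => 0) := by
  refine ⟨fun e => by norm_num, fun e _ => rfl, fun v => by simp⟩

lemma setNonempty (G : SimpleGraph V) :
    {x : ℝ | ∃ f, G.IsFracMatching f ∧ G.fracWeight f = x}.Nonempty :=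
  ⟨0, fun _ => 0, zero_isFM G, by simp [SimpleGraph.fracWeight]⟩

lemma setBdd (G : SimpleGraph V) :
    BddAbove {x : ℝ | ∃ f, G.IsFracMatching f ∧ G.fracWeight f = x} := by
  refine ⟨(G.edgeFinset.card : ℝ), ?_⟩
  rintro x ⟨f, hf, rfl⟩
  calc ∑ e ∈ G.edgeFinset, f e ≤ ∑ _e ∈ G.edgeFinset, (1:ℝ) :=
        Finset.sum_le_sum fun e _ => (hf.1 e).2
    _ = G.edgeFinset.card := by simp

lemma le_fracNu (G : SimpleGraph V) {f : Sym2 V → ℝ} (hf : G.IsFracMatching f) :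
    G.fracWeight f ≤ G.fracNu :=
  le_csSup (setBdd G) ⟨f, hf, rfl⟩

lemma fracNu_le (G : SimpleGraph V) {B : ℝ}
    (h : ∀ f, G.IsFracMatching f → G.fracWeight f ≤ B) : G.fracNu ≤ B :=
  csSup_le (setNonempty G) (by rintro x ⟨f, hf, rfl⟩; exact h f hf)

lemma sum_vertexWeight (G : SimpleGraph V) (f : Sym2 V → ℝ) :
    ∑ v : V, G.vertexWeight f v = 2 * G.fracWeight f := by
  have h1 : ∀ v : V, G.vertexWeight f v
      = ∑ e ∈ G.edgeFinset, (if v ∈ e then f e else 0) := by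
    intro v
    rw [SimpleGraph.vertexWeight, G.incidenceFinset_eq_filter, Finset.sum_filter]
  simp only [h1]
  rw [Finset.sum_comm]
  rw [SimpleGraph.fracWeight, Finset.mul_sum]
  refine Finset.sum_congr rfl ?_
  intro e he
  induction e with
  | _ a b =>
    have hadj : G.Adj a b := by simpa using he
    have hab : a ≠ b := hadj.ne
    have : (Finset.univ.filter (fun v => v ∈ s(a,b))) = {a, b} := by
      ext v; simp [Sym2.mem_iff]
    rw [← Finset.sum_filter, this, Finset.sum_pair hab]
    ring



lemma fracNu_le_half_card (G : SimpleGraph V) (A : Finset V)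
    (hA : ∀ e ∈ G.edgeSet, ∀ v, v ∈ e → v ∈ A) :
    G.fracNu ≤ (A.card : ℝ) / 2 := by
  apply fracNu_le
  intro f hf
  have h2 : 2 * G.fracWeight f = ∑ v : V, G.vertexWeight f v := (sum_vertexWeight G f).symm
  have hz : ∀ v ∈ Finset.univ, v ∉ A → G.vertexWeight f v = 0 := by
    intro v _ hv
    have : G.incidenceFinset v = ∅ := by
      ext e
      simp only [Finset.notMem_empty, iff_false]
      intro he
      rw [SimpleGraph.mem_incidenceFinset] at he
      exact hv (hA e he.1 v he.2)
    rw [SimpleGraph.vertexWeight, this, Finset.sum_empty]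
  have hsum : ∑ v : V, G.vertexWeight f v = ∑ v ∈ A, G.vertexWeight f v :=
    (Finset.sum_subset A.subset_univ (fun v hv hv2 => hz v hv hv2)).symm
  have hle : ∑ v ∈ A, G.vertexWeight f v ≤ (A.card : ℝ) := by
    calc ∑ v ∈ A, G.vertexWeight f v ≤ ∑ _v ∈ A, (1:ℝ) :=
          Finset.sum_le_sum fun v _ => hf.2.2 v
      _ = A.card := by simp
  linarith

lemma fracNu_le_one_center (G : SimpleGraph V) (z : V)
    (hz : ∀ e ∈ G.edgeSet, z ∈ e) : G.fracNu ≤ 1 := by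
  apply fracNu_le
  intro f hf
  have hsub : G.edgeFinset ⊆ G.incidenceFinset z := by
    intro e he
    rw [SimpleGraph.mem_incidenceFinset]
    have he' := (SimpleGraph.mem_edgeFinset).1 he
    exact ⟨he', hz e he'⟩
  calc G.fracWeight f ≤ ∑ e ∈ G.incidenceFinset z, f e :=
        Finset.sum_le_sum_of_subset_of_nonneg hsub (fun e _ _ => (hf.1 e).1)
    _ ≤ 1 := hf.2.2 z

def PDisj (P : Finset (V × V)) : Prop :=
  ∀ p ∈ P, ∀ q ∈ P, p ≠ q → p.1 ≠ q.1 ∧ p.1 ≠ q.2 ∧ p.2 ≠ q.1 ∧ p.2 ≠ q.2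

set_option maxHeartbeats 1000000 in
lemma fracNu_ge (G : SimpleGraph V) (P : Finset (V × V)) (S : Finset V)
    (hP : ∀ p ∈ P, G.Adj p.1 p.2)
    (hPd : PDisj P)
    (hS1 : S.card ≠ 1)
    (hSc : ∀ a ∈ S, ∀ b ∈ S, a ≠ b → G.Adj a b)
    (hsep : ∀ p ∈ P, p.1 ∉ S ∧ p.2 ∉ S) :
    (P.card : ℝ) + (S.card : ℝ) / 2 ≤ G.fracNu := by
  classical
  set c : ℝ := ((S.card : ℝ) - 1)⁻¹ with hc
  set Mset : Finset (Sym2 V) := P.image (fun p => s(p.1, p.2)) with hMset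
  set CP : Sym2 V → Prop := fun e => ∃ a ∈ S, ∃ b ∈ S, a ≠ b ∧ e = s(a, b) with hCP
  set f : Sym2 V → ℝ := fun e => if e ∈ Mset then 1 else if CP e then c else 0 with hf
  -- basic facts
  have hcard2 : ∀ e, CP e → 2 ≤ S.card := by
    rintro e ⟨a, ha, b, hb, hab, _⟩
    exact Finset.one_lt_card.2 ⟨a, ha, b, hb, hab⟩
  have hc01 : 2 ≤ S.card → 0 ≤ c ∧ c ≤ 1 := by
    intro h2
    have h1 : (1:ℝ) ≤ (S.card : ℝ) - 1 := by
      have : (2:ℝ) ≤ (S.card : ℝ) := by exact_mod_cast h2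
      linarith
    constructor
    · positivity
    · rw [hc]; nlinarith [inv_pos.2 (lt_of_lt_of_le one_pos h1), mul_inv_cancel₀ (ne_of_gt (lt_of_lt_of_le one_pos h1))]
  -- f is in [0,1]
  have hf01 : ∀ e, 0 ≤ f e ∧ f e ≤ 1 := by
    intro e
    rw [hf]
    by_cases h1 : e ∈ Mset
    · simp [h1]
    · by_cases h2 : CP e
      · obtain ⟨h0, hle⟩ := hc01 (hcard2 e h2)
        simp [h1, h2, h0, hle]
      · simp [h1, h2]
  -- vertices in Mset edges are in pairs
  have hMvert : ∀ e ∈ Mset, ∀ v, v ∈ e → ∃ p ∈ P, v = p.1 ∨ v = p.2 := by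
    intro e he v hv
    rw [hMset, Finset.mem_image] at he
    obtain ⟨p, hp, rfl⟩ := he
    rw [Sym2.mem_iff] at hv
    exact ⟨p, hp, hv⟩
  -- support
  have hsupp : ∀ e, e ∉ G.edgeSet → f e = 0 := by
    intro e he
    rw [hf]
    have h1 : e ∉ Mset := by
      intro h
      rw [hMset, Finset.mem_image] at h
      obtain ⟨p, hp, rfl⟩ := h
      exact he ((SimpleGraph.mem_edgeSet G).2 (hP p hp))
    have h2 : ¬ CP e := by
      rintro ⟨a, ha, b, hb, hab, rfl⟩
      exact he ((SimpleGraph.mem_edgeSet G).2 (hSc a ha b hb hab))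
    simp [h1, h2]
  -- the vertex sets
  set WP : Finset V := P.biUnion (fun p => {p.1, p.2}) with hWP
  have hWPmem : ∀ v, v ∈ WP ↔ ∃ p ∈ P, v = p.1 ∨ v = p.2 := by
    intro v
    rw [hWP]
    simp [Finset.mem_biUnion]
  -- vertexWeight values
  have hvwA : ∀ v ∈ WP, G.vertexWeight f v = 1 := by
    intro v hv
    obtain ⟨p, hp, hvp⟩ := (hWPmem v).1 hv
    have hadj := hP p hp
    have hmem : s(p.1, p.2) ∈ G.incidenceFinset v := by
      rw [SimpleGraph.mem_incidenceFinset]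
      refine ⟨(SimpleGraph.mem_edgeSet G).2 hadj, ?_⟩
      rw [Sym2.mem_iff]
      tauto
    rw [SimpleGraph.vertexWeight]
    rw [Finset.sum_eq_single_of_mem _ hmem]
    · have : s(p.1, p.2) ∈ Mset := by
        rw [hMset, Finset.mem_image]; exact ⟨p, hp, rfl⟩
      simp [hf, this]
    · intro e he hne
      rw [SimpleGraph.mem_incidenceFinset] at he
      have hve : v ∈ e := he.2
      rw [hf]
      have h1 : e ∉ Mset := by
        intro h
        rw [hMset, Finset.mem_image] at h
        obtain ⟨q, hq, rfl⟩ := h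
        have hqp : q ≠ p := by rintro rfl; exact hne rfl
        have := hPd q hq p hp hqp
        rw [Sym2.mem_iff] at hve
        rcases hvp with rfl | rfl <;> rcases hve with h | h <;> simp_all
      have h2 : ¬ CP e := by
        rintro ⟨a, ha, b, hb, hab, rfl⟩
        rw [Sym2.mem_iff] at hve
        have hvS : v ∈ S := by rcases hve with rfl | rfl <;> assumption
        rcases hvp with rfl | rfl
        · exact (hsep p hp).1 hvS
        · exact (hsep p hp).2 hvS
      simp [h1, h2]
  have hvwB : ∀ v ∈ S, v ∉ WP → G.vertexWeight f v = 1 := by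
    intro v hvS _
    have h2card : 2 ≤ S.card := by
      have h1 : 1 ≤ S.card := Finset.card_pos.2 ⟨v, hvS⟩
      omega
    set T : Finset (Sym2 V) := (S.erase v).image (fun b => s(v, b)) with hT
    have hTsub : T ⊆ G.incidenceFinset v := by
      intro e he
      rw [hT, Finset.mem_image] at he
      obtain ⟨b, hb, rfl⟩ := he
      have hbv : b ≠ v := Finset.ne_of_mem_erase hb
      have hbS : b ∈ S := Finset.mem_of_mem_erase hb
      rw [SimpleGraph.mem_incidenceFinset]
      exact ⟨(SimpleGraph.mem_edgeSet G).2 (hSc v hvS b hbS (Ne.symm hbv)),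
        by rw [Sym2.mem_iff]; left; rfl⟩
    have hzero : ∀ e ∈ G.incidenceFinset v, e ∉ T → f e = 0 := by
      intro e he heT
      rw [SimpleGraph.mem_incidenceFinset] at he
      have hve : v ∈ e := he.2
      rw [hf]
      have h1 : e ∉ Mset := by
        intro h
        obtain ⟨p, hp, hvp⟩ := hMvert e h v hve
        rcases hvp with rfl | rfl
        · exact (hsep p hp).1 hvS
        · exact (hsep p hp).2 hvS
      have h2 : ¬ CP e := by
        rintro ⟨a, ha, b, hb, hab, rfl⟩
        rw [Sym2.mem_iff] at hve
        apply heT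
        rw [hT, Finset.mem_image]
        rcases hve with rfl | rfl
        · exact ⟨b, Finset.mem_erase.2 ⟨Ne.symm hab, hb⟩, rfl⟩
        · exact ⟨a, Finset.mem_erase.2 ⟨hab, ha⟩, Sym2.eq_swap⟩
      simp [h1, h2]
    have hsum : G.vertexWeight f v = ∑ e ∈ T, f e := by
      rw [SimpleGraph.vertexWeight]
      exact (Finset.sum_subset hTsub hzero).symm
    have hinj : ∀ b ∈ S.erase v, ∀ b' ∈ S.erase v,
        s(v, b) = s(v, b') → b = b' := by
      intro b hb b' hb' heq
      rw [Sym2.eq_iff] at heq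
      rcases heq with ⟨_, h⟩ | ⟨h1, h2⟩
      · exact h
      · exact absurd h1.symm (Finset.ne_of_mem_erase hb')
    have himg : ∑ e ∈ T, f e = ∑ b ∈ S.erase v, f s(v, b) := by
      rw [hT]; exact Finset.sum_image hinj
    have hval : ∀ b ∈ S.erase v, f s(v, b) = c := by
      intro b hb
      have hbv : b ≠ v := Finset.ne_of_mem_erase hb
      have hbS : b ∈ S := Finset.mem_of_mem_erase hb
      rw [hf]
      have h1 : s(v, b) ∉ Mset := by
        intro h
        obtain ⟨p, hp, hvp⟩ := hMvert _ h v (by rw [Sym2.mem_iff]; left; rfl)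
        rcases hvp with rfl | rfl
        · exact (hsep p hp).1 hvS
        · exact (hsep p hp).2 hvS
      have h2 : CP s(v, b) := ⟨v, hvS, b, hbS, Ne.symm hbv, rfl⟩
      simp [h1, h2]
    rw [hsum, himg, Finset.sum_congr rfl hval, Finset.sum_const,
      Finset.card_erase_of_mem hvS, nsmul_eq_mul]
    have hne : ((S.card : ℝ) - 1) ≠ 0 := by
      have : (2:ℝ) ≤ (S.card : ℝ) := by exact_mod_cast h2card
      linarith
    have hcast : ((S.card - 1 : ℕ) : ℝ) = (S.card : ℝ) - 1 := by
      have : 1 ≤ S.card := le_trans (by norm_num) h2card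
      push_cast [this]; ring
    rw [hcast, hc, mul_inv_cancel₀ hne]
  have hvwC : ∀ v, v ∉ WP → v ∉ S → G.vertexWeight f v = 0 := by
    intro v hvW hvS
    rw [SimpleGraph.vertexWeight]
    apply Finset.sum_eq_zero
    intro e he
    rw [SimpleGraph.mem_incidenceFinset] at he
    have hve : v ∈ e := he.2
    rw [hf]
    have h1 : e ∉ Mset := by
      intro h
      exact hvW ((hWPmem v).2 (hMvert e h v hve))
    have h2 : ¬ CP e := by
      rintro ⟨a, ha, b, hb, hab, rfl⟩
      rw [Sym2.mem_iff] at hve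
      exact hvS (by rcases hve with rfl | rfl <;> assumption)
    simp [h1, h2]
  -- vertex constraint
  have hvw1 : ∀ v : V, G.vertexWeight f v ≤ 1 := by
    intro v
    by_cases h1 : v ∈ WP
    · rw [hvwA v h1]
    · by_cases h2 : v ∈ S
      · rw [hvwB v h2 h1]
      · rw [hvwC v h1 h2]; norm_num
  have hFM : G.IsFracMatching f := ⟨hf01, hsupp, fun v => hvw1 v⟩
  -- total weight
  have hdisjWS : Disjoint WP S := by
    rw [Finset.disjoint_left]
    intro v hv hvS
    obtain ⟨p, hp, hvp⟩ := (hWPmem v).1 hv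
    rcases hvp with rfl | rfl
    · exact (hsep p hp).1 hvS
    · exact (hsep p hp).2 hvS
  have hpd2 : ∀ p ∈ P, ∀ q ∈ P, p ≠ q → Disjoint ({p.1, p.2} : Finset V) {q.1, q.2} := by
    intro p hp q hq hpq
    rw [Finset.disjoint_left]
    intro v hv hv2
    simp only [Finset.mem_insert, Finset.mem_singleton] at hv hv2
    have := hPd p hp q hq hpq
    rcases hv with rfl | rfl <;> rcases hv2 with h | h <;> simp_all
  have hc2 : ∀ p ∈ P, ({p.1, p.2} : Finset V).card = 2 := by
    intro p hp
    rw [Finset.card_insert_of_notMem (by simp [(hP p hp).ne]), Finset.card_singleton]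
  have hcardWP : WP.card = 2 * P.card := by
    rw [hWP, Finset.card_biUnion hpd2, Finset.sum_congr rfl hc2, Finset.sum_const,
      smul_eq_mul, mul_comm]
  have hsumvw : ∑ v : V, G.vertexWeight f v = 2 * P.card + S.card := by
    have : ∀ v : V, G.vertexWeight f v = if v ∈ WP ∪ S then 1 else 0 := by
      intro v
      by_cases h1 : v ∈ WP
      · rw [hvwA v h1, if_pos (Finset.mem_union_left _ h1)]
      · by_cases h2 : v ∈ S
        · rw [hvwB v h2 h1, if_pos (Finset.mem_union_right _ h2)]
        · rw [hvwC v h1 h2, if_neg (by simp [h1, h2])]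
    rw [Finset.sum_congr rfl (fun v _ => this v), Finset.sum_ite_mem,
      Finset.univ_inter, Finset.sum_const, nsmul_eq_mul, mul_one,
      Finset.card_union_of_disjoint hdisjWS, hcardWP]
    push_cast
    ring
  have hweight : G.fracWeight f = (P.card : ℝ) + (S.card : ℝ) / 2 := by
    have := sum_vertexWeight G f
    rw [hsumvw] at this
    linarith
  rw [← hweight]
  exact le_fracNu G hFM

def IsM (G : SimpleGraph V) (P : Finset (V × V)) : Prop :=
  (∀ p ∈ P, G.Adj p.1 p.2) ∧ PDisj P

lemma isM_empty (G : SimpleGraph V) : IsM G (∅ : Finset (V × V)) :=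
  ⟨fun p hp => absurd hp (Finset.notMem_empty p),
   fun p hp => absurd hp (Finset.notMem_empty p)⟩

lemma exists_max_matching (G : SimpleGraph V) :
    ∃ P : Finset (V × V), IsM G P ∧ ∀ Q : Finset (V × V), IsM G Q → Q.card ≤ P.card := by
  classical
  obtain ⟨P, hPmem, hPmax⟩ := Finset.exists_max_image
    ((Finset.univ : Finset (Finset (V × V))).filter (fun Q => IsM G Q))
    Finset.card ⟨∅, by simp [isM_empty G]⟩
  refine ⟨P, (Finset.mem_filter.1 hPmem).2, fun Q hQ => hPmax Q ?_⟩
  exact Finset.mem_filter.2 ⟨Finset.mem_univ Q, hQ⟩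

lemma clique_pairs (G : SimpleGraph V) (n : ℕ) :
    ∀ T : Finset V, T.card = n → (∀ a ∈ T, ∀ b ∈ T, a ≠ b → G.Adj a b) → Even n →
    ∃ Q : Finset (V × V), (∀ p ∈ Q, p.1 ∈ T ∧ p.2 ∈ T) ∧ IsM G Q ∧ 2 * Q.card = n := by
  induction n using Nat.strong_induction_on with
  | _ n ih =>
    intro T hT hclique heven
    rcases Nat.eq_zero_or_pos n with rfl | hpos
    · exact ⟨∅, fun p hp => absurd hp (Finset.notMem_empty p), isM_empty G, by simp⟩
    · have h2 : 2 ≤ n := by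
        rcases heven with ⟨k, hk⟩; omega
      obtain ⟨a, ha, b, hb, hab⟩ := Finset.one_lt_card.1 (by omega : 1 < T.card)
      set T' := (T.erase a).erase b with hT'
      have hT'sub : T' ⊆ T := (Finset.erase_subset _ _).trans (Finset.erase_subset _ _)
      have haT' : a ∉ T' := fun h => (Finset.ne_of_mem_erase (Finset.mem_of_mem_erase h)) rfl
      have hbT' : b ∉ T' := fun h => (Finset.ne_of_mem_erase h) rfl
      have hcard' : T'.card = n - 2 := by
        rw [hT', Finset.card_erase_of_mem (Finset.mem_erase.2 ⟨Ne.symm hab, hb⟩),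
          Finset.card_erase_of_mem ha, hT]
        omega
      obtain ⟨Q, hQT, hQM, hQc⟩ := ih (n - 2) (by omega) T' hcard'
        (fun x hx y hy hxy => hclique x (hT'sub hx) y (hT'sub hy) hxy)
        (by rcases heven with ⟨k, hk⟩; exact ⟨k - 1, by omega⟩)
      have habQ : (a, b) ∉ Q := fun h => haT' (hQT _ h).1
      refine ⟨insert (a, b) Q, ?_, ⟨?_, ?_⟩, ?_⟩
      · intro p hp
        rcases Finset.mem_insert.1 hp with rfl | hp
        · exact ⟨ha, hb⟩
        · exact ⟨hT'sub (hQT p hp).1, hT'sub (hQT p hp).2⟩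
      · intro p hp
        rcases Finset.mem_insert.1 hp with rfl | hp
        · exact hclique a ha b hb hab
        · exact hQM.1 p hp
      · intro p hp q hq hpq
        have key : ∀ r ∈ Q, (a, b).1 ≠ r.1 ∧ (a, b).1 ≠ r.2 ∧ (a, b).2 ≠ r.1 ∧ (a, b).2 ≠ r.2 := by
          intro r hr
          have h1 := (hQT r hr).1
          have h2 := (hQT r hr).2
          refine ⟨fun h => haT' ?_, fun h => haT' ?_, fun h => hbT' ?_, fun h => hbT' ?_⟩
          · rw [show a = r.1 from h]; exact h1
          · rw [show a = r.2 from h]; exact h2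
          · rw [show b = r.1 from h]; exact h1
          · rw [show b = r.2 from h]; exact h2
        rcases Finset.mem_insert.1 hp with rfl | hp <;> rcases Finset.mem_insert.1 hq with rfl | hq
        · exact absurd rfl hpq
        · exact key q hq
        · have h := key p hp
          exact ⟨Ne.symm h.1, Ne.symm h.2.2.1, Ne.symm h.2.1, Ne.symm h.2.2.2⟩
        · exact hQM.2 p hp q hq hpq
      · rw [Finset.card_insert_of_notMem habQ]
        omega

lemma nu_ge_clique (G : SimpleGraph V) (S : Finset V) (hS1 : S.card ≠ 1)
    (hSc : ∀ a ∈ S, ∀ b ∈ S, a ≠ b → G.Adj a b) :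
    (S.card : ℝ) / 2 ≤ G.fracNu := by
  have := fracNu_ge G ∅ S (fun p hp => absurd hp (Finset.notMem_empty p))
    (fun p hp => absurd hp (Finset.notMem_empty p)) hS1 hSc
    (fun p hp => absurd hp (Finset.notMem_empty p))
  simpa using this

lemma nu_ge_matching (G : SimpleGraph V) (P : Finset (V × V)) (hP : IsM G P) :
    (P.card : ℝ) ≤ G.fracNu := by
  have := fracNu_ge G P ∅ hP.1 hP.2 (by simp)
    (fun a ha => absurd ha (Finset.notMem_empty a))
    (fun p _ => ⟨Finset.notMem_empty _, Finset.notMem_empty _⟩)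
  simpa using this

lemma nu_nonneg (G : SimpleGraph V) : 0 ≤ G.fracNu := by
  have := nu_ge_matching G ∅ (isM_empty G)
  simpa using this

lemma isM_pair (G : SimpleGraph V) {a b : V} (h : G.Adj a b) :
    IsM G {(a, b)} := by
  constructor
  · intro p hp
    rw [Finset.mem_singleton] at hp
    subst hp; exact h
  · intro p hp q hq hpq
    rw [Finset.mem_singleton] at hp hq
    subst hp; subst hq; exact absurd rfl hpq

lemma nu_ge_one (G : SimpleGraph V) (hG : G.edgeSet.Nonempty) : 1 ≤ G.fracNu := by
  obtain ⟨e, he⟩ := hG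
  induction e with
  | _ a b =>
    rw [SimpleGraph.mem_edgeSet] at he
    have := nu_ge_matching G {(a, b)} (isM_pair G he)
    simpa using this

lemma isM_two (G : SimpleGraph V) {a b c d : V} (hab : G.Adj a b) (hcd : G.Adj c d)
    (h1 : a ≠ c) (h2 : a ≠ d) (h3 : b ≠ c) (h4 : b ≠ d) :
    IsM G {(a, b), (c, d)} ∧ ({(a, b), (c, d)} : Finset (V × V)).card = 2 := by
  have hne : ((a, b) : V × V) ≠ (c, d) := by
    intro h; exact h1 (congrArg Prod.fst h)
  refine ⟨⟨?_, ?_⟩, ?_⟩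
  · intro p hp
    rcases Finset.mem_insert.1 hp with rfl | hp
    · exact hab
    · rw [Finset.mem_singleton] at hp; subst hp; exact hcd
  · intro p hp q hq hpq
    rcases Finset.mem_insert.1 hp with rfl | hp <;>
      [skip; rw [Finset.mem_singleton] at hp] <;>
    [rcases Finset.mem_insert.1 hq with rfl | hq; rcases Finset.mem_insert.1 hq with rfl | hq] <;>
      first
      | exact absurd rfl hpq
      | skip
    · rw [Finset.mem_singleton] at hq; subst hq; exact ⟨h1, h2, h3, h4⟩
    · subst hp; exact ⟨h1.symm, h3.symm, h2.symm, h4.symm⟩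
    · subst hp
      rw [Finset.mem_singleton] at hq; subst hq; exact absurd rfl hpq
  · rw [Finset.card_insert_of_notMem (by simp [hne]), Finset.card_singleton]

lemma star_sum (H : SimpleGraph V) (hn : 28 ≤ Fintype.card V) (z : V)
    (hstar : ∀ x y, H.Adj x y ↔ x ≠ y ∧ (x = z ∨ y = z)) :
    H.fracNu + Hᶜ.fracNu = ((Fintype.card V : ℝ) + 1) / 2 := by
  have hcard1 : 1 ≤ Fintype.card V := by omega
  have h1 : H.fracNu = 1 := by
    apply le_antisymm
    · apply fracNu_le_one_center H z
      intro e he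
      induction e with
      | _ a b =>
        rw [SimpleGraph.mem_edgeSet, hstar] at he
        rw [Sym2.mem_iff]
        rcases he.2 with rfl | rfl
        · left; rfl
        · right; rfl
    · obtain ⟨x, hx⟩ := Fintype.exists_ne_of_one_lt_card (by omega) z
      have hadj : H.Adj z x := (hstar z x).2 ⟨(Ne.symm hx), Or.inl rfl⟩
      have := nu_ge_matching H {(z, x)} (isM_pair H hadj)
      simpa using this
  have hcompl : ∀ a b : V, a ≠ z → b ≠ z → a ≠ b → Hᶜ.Adj a b := by
    intro a b haz hbz hab
    rw [SimpleGraph.compl_adj]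
    refine ⟨hab, fun h => ?_⟩
    rcases ((hstar a b).1 h).2 with rfl | rfl
    · exact haz rfl
    · exact hbz rfl
  have h2 : Hᶜ.fracNu = ((Fintype.card V : ℝ) - 1) / 2 := by
    have hcc : ((Finset.univ.erase z).card : ℝ) = (Fintype.card V : ℝ) - 1 := by
      rw [Finset.card_erase_of_mem (Finset.mem_univ z), Finset.card_univ]
      push_cast [hcard1]
      ring
    apply le_antisymm
    · have := fracNu_le_half_card Hᶜ (Finset.univ.erase z) ?_
      · rw [hcc] at this; exact this
      · intro e he v hv
        induction e with
        | _ a b =>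
          rw [SimpleGraph.mem_edgeSet, SimpleGraph.compl_adj] at he
          have haz : a ≠ z := fun h => he.2 ((hstar a b).2 ⟨he.1, Or.inl h⟩)
          have hbz : b ≠ z := fun h => he.2 ((hstar a b).2 ⟨he.1, Or.inr h⟩)
          rw [Sym2.mem_iff] at hv
          rcases hv with rfl | rfl
          · exact Finset.mem_erase.2 ⟨haz, Finset.mem_univ v⟩
          · exact Finset.mem_erase.2 ⟨hbz, Finset.mem_univ v⟩
    · have hcardE : (Finset.univ.erase z).card ≠ 1 := by
        rw [Finset.card_erase_of_mem (Finset.mem_univ z), Finset.card_univ]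
        omega
      have := nu_ge_clique Hᶜ (Finset.univ.erase z) hcardE ?_
      · rw [hcc] at this; exact this
      · intro a ha b hb hab
        exact hcompl a b (Finset.ne_of_mem_erase ha) (Finset.ne_of_mem_erase hb) hab
  rw [h1, h2]
  ring

lemma isM_insert (G : SimpleGraph V) {P : Finset (V × V)} (hP : IsM G P) {x y : V}
    (hadj : G.Adj x y)
    (hx : ∀ p ∈ P, x ≠ p.1 ∧ x ≠ p.2) (hy : ∀ p ∈ P, y ≠ p.1 ∧ y ≠ p.2) :
    IsM G (insert (x, y) P) ∧ (insert (x, y) P).card = P.card + 1 := by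
  have hmem : (x, y) ∉ P := fun h => (hx _ h).1 rfl
  refine ⟨⟨?_, ?_⟩, Finset.card_insert_of_notMem hmem⟩
  · intro p hp
    rcases Finset.mem_insert.1 hp with rfl | hp
    · exact hadj
    · exact hP.1 p hp
  · intro p hp q hq hpq
    rcases Finset.mem_insert.1 hp with rfl | hp <;> rcases Finset.mem_insert.1 hq with rfl | hq
    · exact absurd rfl hpq
    · exact ⟨(hx q hq).1, (hx q hq).2, (hy q hq).1, (hy q hq).2⟩
    · exact ⟨Ne.symm (hx p hp).1, Ne.symm (hy p hp).1, Ne.symm (hx p hp).2, Ne.symm (hy p hp).2⟩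
    · exact hP.2 p hp q hq hpq

lemma exists_adj (H : SimpleGraph V) (h : H.edgeSet.Nonempty) : ∃ a b, H.Adj a b := by
  obtain ⟨e, he⟩ := h
  induction e with
  | _ a b => exact ⟨a, b, (SimpleGraph.mem_edgeSet H).1 he⟩

def IsStar (G : SimpleGraph V) : Prop :=
  ∃ v : V, ∀ x y : V, G.Adj x y ↔ (x ≠ y ∧ (x = v ∨ y = v))




set_option maxHeartbeats 3000000 in
lemma master (G : SimpleGraph V) (hn : 28 ≤ Fintype.card V)
    (hG : G.edgeSet.Nonempty) (hGc : Gᶜ.edgeSet.Nonempty)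
    (hsG : ¬ IsStar G) (hsGc : ¬ IsStar Gᶜ) :
    (Fintype.card V : ℝ) / 2 + 1 ≤ G.fracNu + Gᶜ.fracNu := by
  classical
  obtain ⟨P, hPM, hPmax⟩ := exists_max_matching G
  set W : Finset V := P.biUnion (fun p => {p.1, p.2}) with hW
  set U : Finset V := Finset.univ \ W with hU
  have hWmem : ∀ v, v ∈ W ↔ ∃ p ∈ P, v = p.1 ∨ v = p.2 := by
    intro v; rw [hW]; simp [Finset.mem_biUnion]
  have hUmem : ∀ v, v ∈ U ↔ v ∉ W := by
    intro v; rw [hU]; simp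
  have hPW : ∀ p ∈ P, p.1 ∈ W ∧ p.2 ∈ W := by
    intro p hp
    exact ⟨(hWmem p.1).2 ⟨p, hp, Or.inl rfl⟩, (hWmem p.2).2 ⟨p, hp, Or.inr rfl⟩⟩
  have hUW : ∀ u ∈ U, ∀ w ∈ W, u ≠ w := by
    intro u hu w hw h; rw [hUmem] at hu; exact hu (h ▸ hw)
  have hnotW : ∀ x, x ∉ W → ∀ p ∈ P, x ≠ p.1 ∧ x ≠ p.2 := by
    intro x hx p hp
    constructor
    · intro h; exact hx (h ▸ (hPW p hp).1)
    · intro h; exact hx (h ▸ (hPW p hp).2)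
  have hext : ∀ x y : V, G.Adj x y → x ∉ W → y ∉ W → False := by
    intro x y hadj hx hy
    obtain ⟨hQ, hQc⟩ := isM_insert G hPM hadj (hnotW x hx) (hnotW y hy)
    have := hPmax _ hQ
    omega
  have hUindep : ∀ u ∈ U, ∀ u' ∈ U, ¬G.Adj u u' := by
    intro u hu u' hu' hadj
    exact hext u u' hadj ((hUmem u).1 hu) ((hUmem u').1 hu')
  have hUclique : ∀ u ∈ U, ∀ u' ∈ U, u ≠ u' → Gᶜ.Adj u u' := by
    intro u hu u' hu' hne
    exact (SimpleGraph.compl_adj G u u').2 ⟨hne, hUindep u hu u' hu'⟩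
  have hWcard : W.card = 2 * P.card := by
    have hpd2 : ∀ p ∈ P, ∀ q ∈ P, p ≠ q → Disjoint ({p.1, p.2} : Finset V) {q.1, q.2} := by
      intro p hp q hq hpq
      rw [Finset.disjoint_left]
      intro v hv hv2
      simp only [Finset.mem_insert, Finset.mem_singleton] at hv hv2
      have hd := hPM.2 p hp q hq hpq
      rcases hv with rfl | rfl <;> rcases hv2 with h | h
      · exact hd.1 h
      · exact hd.2.1 h
      · exact hd.2.2.1 h
      · exact hd.2.2.2 h
    have hc2 : ∀ p ∈ P, ({p.1, p.2} : Finset V).card = 2 := by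
      intro p hp
      rw [Finset.card_insert_of_notMem (by simp [(hPM.1 p hp).ne]), Finset.card_singleton]
    rw [hW, Finset.card_biUnion hpd2, Finset.sum_congr rfl hc2, Finset.sum_const,
      smul_eq_mul, mul_comm]
  have hWuniv : W ⊆ Finset.univ := Finset.subset_univ W
  have hUcard : U.card = Fintype.card V - 2 * P.card := by
    rw [hU, Finset.card_sdiff_of_subset hWuniv, Finset.card_univ, hWcard]
  have hWle : 2 * P.card ≤ Fintype.card V := by
    rw [← hWcard, ← Finset.card_univ]
    exact Finset.card_le_card hWuniv
  have hncast : (Fintype.card V : ℝ) = 2 * (P.card : ℝ) + (U.card : ℝ) := by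
    rw [hUcard]; push_cast [hWle]; ring
  have hν1 : 1 ≤ P.card := by
    obtain ⟨e, he⟩ := hG
    induction e with
    | _ a b =>
      rw [SimpleGraph.mem_edgeSet] at he
      have := hPmax _ (isM_pair G he)
      simpa using this
  have hνG : (P.card : ℝ) ≤ G.fracNu := nu_ge_matching G P hPM
  have hGc1 : 1 ≤ Gᶜ.fracNu := nu_ge_one Gᶜ hGc
  -- case split on U.card
  rcases Nat.lt_or_ge U.card 2 with hu2 | hu2
  · rcases Nat.lt_or_ge U.card 1 with hu1 | hu1
    · -- u = 0
      have h0 : U.card = 0 := by omega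
      have : (Fintype.card V : ℝ) = 2 * (P.card : ℝ) := by rw [hncast, h0]; norm_num
      linarith
    · -- u = 1
      have h1 : U.card = 1 := by omega
      by_cases h2m : ∃ a b c d : V, Gᶜ.Adj a b ∧ Gᶜ.Adj c d ∧ a ≠ c ∧ a ≠ d ∧ b ≠ c ∧ b ≠ d
      · obtain ⟨a, b, c, d, hab, hcd, h1', h2', h3', h4'⟩ := h2m
        obtain ⟨hM2, hc2⟩ := isM_two Gᶜ hab hcd h1' h2' h3' h4'
        have h2le : (2 : ℝ) ≤ Gᶜ.fracNu := by
          have := nu_ge_matching Gᶜ _ hM2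
          rw [hc2] at this
          push_cast at this
          exact this
        have hcV : (Fintype.card V : ℝ) = 2 * (P.card : ℝ) + 1 := by
          rw [hncast, h1]; norm_num
        linarith
      · by_cases htri : ∃ a b c : V, Gᶜ.Adj a b ∧ Gᶜ.Adj b c ∧ Gᶜ.Adj a c
        · obtain ⟨a, b, c, hab, hbc, hac⟩ := htri
          have hS3 : ({a, b, c} : Finset V).card = 3 := by
            rw [Finset.card_insert_of_notMem (by simp [hab.ne, hac.ne]),
              Finset.card_insert_of_notMem (by simp [hbc.ne]), Finset.card_singleton]
          have hclq : ∀ x ∈ ({a, b, c} : Finset V), ∀ y ∈ ({a, b, c} : Finset V),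
              x ≠ y → Gᶜ.Adj x y := by
            intro x hx y hy hxy
            simp only [Finset.mem_insert, Finset.mem_singleton] at hx hy
            rcases hx with rfl | rfl | rfl <;> rcases hy with rfl | rfl | rfl <;>
              first
                | exact absurd rfl hxy
                | assumption
                | exact hab.symm
                | exact hbc.symm
                | exact hac.symm
          have h32 : (3 : ℝ) / 2 ≤ Gᶜ.fracNu := by
            have := nu_ge_clique Gᶜ {a, b, c} (by rw [hS3]; omega) hclq
            rw [hS3] at this
            push_cast at this
            exact this
          have hcV : (Fintype.card V : ℝ) = 2 * (P.card : ℝ) + 1 := by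
            rw [hncast, h1]; norm_num
          linarith
        · -- star-shaped complement
          have hmeet : ∀ a b c d : V, Gᶜ.Adj a b → Gᶜ.Adj c d →
              a = c ∨ a = d ∨ b = c ∨ b = d := by
            intro a b c d hab hcd
            by_contra h
            push_neg at h
            exact h2m ⟨a, b, c, d, hab, hcd, h.1, h.2.1, h.2.2.1, h.2.2.2⟩
          have hnotri : ∀ a b c : V, Gᶜ.Adj a b → Gᶜ.Adj b c → Gᶜ.Adj a c → False :=
            fun a b c hh1 hh2 hh3 => htri ⟨a, b, c, hh1, hh2, hh3⟩
          have hcenter : ∃ z, ∀ x y, Gᶜ.Adj x y → z = x ∨ z = y := by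
            obtain ⟨a, b, hab⟩ := exists_adj Gᶜ hGc
            by_cases ha : ∀ x y, Gᶜ.Adj x y → a = x ∨ a = y
            · exact ⟨a, ha⟩
            · push_neg at ha
              obtain ⟨c, d, hcd, hac, had⟩ := ha
              have hb : b = c ∨ b = d := by
                rcases hmeet a b c d hab hcd with h | h | h | h
                · exact absurd h hac
                · exact absurd h had
                · exact Or.inl h
                · exact Or.inr h
              obtain ⟨e, hbe, hea⟩ : ∃ e, Gᶜ.Adj b e ∧ e ≠ a := by
                rcases hb with rfl | rfl
                · exact ⟨d, hcd, fun h => had h.symm⟩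
                · exact ⟨c, hcd.symm, fun h => hac h.symm⟩
              refine ⟨b, fun x y hxy => ?_⟩
              by_contra hxyb
              push_neg at hxyb
              obtain ⟨hbx, hby⟩ := hxyb
              have hax : a = x ∨ a = y := by
                rcases hmeet x y a b hxy hab with h | h | h | h
                · exact Or.inl h.symm
                · exact absurd h.symm hbx
                · exact Or.inr h.symm
                · exact absurd h.symm hby
              have hex : e = x ∨ e = y := by
                rcases hmeet x y b e hxy hbe with h | h | h | h
                · exact absurd h.symm hbx
                · exact Or.inl h.symm
                · exact absurd h.symm hby
                · exact Or.inr h.symm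
              have hae : Gᶜ.Adj a e := by
                rcases hax with rfl | rfl <;> rcases hex with h | h
                · exact absurd h hea
                · rw [← h] at hxy; exact hxy
                · rw [← h] at hxy; exact hxy.symm
                · exact absurd h hea
              exact hnotri a b e hab hbe hae
          obtain ⟨z, hz⟩ := hcenter
          by_cases hall : ∀ x, x ≠ z → Gᶜ.Adj z x
          · exfalso
            apply hsGc
            refine ⟨z, fun x y => ⟨fun h => ⟨h.ne, ?_⟩, fun h => ?_⟩⟩
            · rcases hz x y h with h' | h'
              · exact Or.inl h'.symm
              · exact Or.inr h'.symm
            · obtain ⟨hxy, hor⟩ := h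
              rcases hor with rfl | rfl
              · exact hall y (Ne.symm hxy)
              · exact (hall x hxy).symm
          · push_neg at hall
            obtain ⟨x, hxz, hnadj⟩ := hall
            have hzx : G.Adj z x := by
              by_contra hc
              exact hnadj ((SimpleGraph.compl_adj G z x).2 ⟨Ne.symm hxz, hc⟩)
            set S : Finset V := Finset.univ \ {z, x} with hS
            have hScard : S.card = Fintype.card V - 2 := by
              rw [hS, Finset.card_sdiff_of_subset (Finset.subset_univ _), Finset.card_univ,
                Finset.card_insert_of_notMem (by simp [Ne.symm hxz]), Finset.card_singleton]
            have hSclq : ∀ p ∈ S, ∀ q ∈ S, p ≠ q → G.Adj p q := by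
              intro p hp q hq hpq
              rw [hS, Finset.mem_sdiff] at hp hq
              simp only [Finset.mem_insert, Finset.mem_singleton, not_or] at hp hq
              by_contra hc
              rcases hz p q ((SimpleGraph.compl_adj G p q).2 ⟨hpq, hc⟩) with h' | h'
              · exact hp.2.1 h'.symm
              · exact hq.2.1 h'.symm
            have hkey := fracNu_ge G {(z, x)} S
              (by intro p hp; rw [Finset.mem_singleton] at hp; subst hp; exact hzx)
              ((isM_pair G hzx).2)
              (by rw [hScard]; omega)
              hSclq
              (by intro p hp; rw [Finset.mem_singleton] at hp; subst hp
                  constructor <;> simp [hS])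
            rw [Finset.card_singleton] at hkey
            have hc2 : ((S.card : ℕ) : ℝ) = (Fintype.card V : ℝ) - 2 := by
              rw [hScard]; push_cast [show 2 ≤ Fintype.card V by omega]; ring
            rw [hc2] at hkey
            push_cast at hkey
            linarith
  · -- u ≥ 2
    by_cases hWc : ∃ w ∈ W, ∃ w' ∈ W, Gᶜ.Adj w w'
    · obtain ⟨w, hw, w', hw', hww⟩ := hWc
      have hkey := fracNu_ge Gᶜ {(w, w')} U
        (by intro p hp; rw [Finset.mem_singleton] at hp; subst hp; exact hww)
        ((isM_pair Gᶜ hww).2)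
        (by omega)
        hUclique
        (by intro p hp; rw [Finset.mem_singleton] at hp; subst hp
            exact ⟨fun h => ((hUmem w).1 h) hw, fun h => ((hUmem w').1 h) hw'⟩)
      rw [Finset.card_singleton] at hkey
      push_cast at hkey
      linarith
    · push_neg at hWc
      have hWclique : ∀ w ∈ W, ∀ w' ∈ W, w ≠ w' → G.Adj w w' := by
        intro w hw w' hw' hne
        by_contra hc
        exact hWc w hw w' hw' ((SimpleGraph.compl_adj G w w').2 ⟨hne, hc⟩)
      have F1 : ∀ u0 ∈ U, ∀ u1 ∈ U, ∀ w0 ∈ W, ∀ w1 ∈ W, u0 ≠ u1 → w0 ≠ w1 →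
          G.Adj u0 w0 → G.Adj u1 w1 → False := by
        intro u0 hu0 u1 hu1 w0 hw0 w1 hw1 huu hww hA0 hA1
        set T := (W.erase w0).erase w1 with hT
        have hTsub : T ⊆ W := (Finset.erase_subset _ _).trans (Finset.erase_subset _ _)
        have hTcard : T.card = 2 * P.card - 2 := by
          rw [hT, Finset.card_erase_of_mem (Finset.mem_erase.2 ⟨Ne.symm hww, hw1⟩),
            Finset.card_erase_of_mem hw0, hWcard]
          omega
        have hw0T : w0 ∉ T := fun h =>
          (Finset.ne_of_mem_erase (Finset.mem_of_mem_erase h)) rfl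
        have hw1T : w1 ∉ T := fun h => (Finset.ne_of_mem_erase h) rfl
        obtain ⟨Q, hQT, hQM, hQc⟩ := clique_pairs G T.card T rfl
          (fun a ha b hb hab => hWclique a (hTsub ha) b (hTsub hb) hab)
          (by rw [hTcard]; exact ⟨P.card - 1, by omega⟩)
        obtain ⟨hQ1M, hQ1c⟩ := isM_insert G hQM hA1
          (fun p hp => ⟨fun h => hUW u1 hu1 p.1 (hTsub (hQT p hp).1) h,
            fun h => hUW u1 hu1 p.2 (hTsub (hQT p hp).2) h⟩)
          (fun p hp => ⟨fun h => hw1T (by rw [h]; exact (hQT p hp).1),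
            fun h => hw1T (by rw [h]; exact (hQT p hp).2)⟩)
        obtain ⟨hQ2M, hQ2c⟩ := isM_insert G hQ1M hA0
          (by intro p hp
              rcases Finset.mem_insert.1 hp with rfl | hp
              · exact ⟨huu, hUW u0 hu0 w1 hw1⟩
              · exact ⟨fun h => hUW u0 hu0 p.1 (hTsub (hQT p hp).1) h,
                  fun h => hUW u0 hu0 p.2 (hTsub (hQT p hp).2) h⟩)
          (by intro p hp
              rcases Finset.mem_insert.1 hp with rfl | hp
              · exact ⟨Ne.symm (hUW u1 hu1 w0 hw0), hww⟩
              · exact ⟨fun h => hw0T (by rw [h]; exact (hQT p hp).1),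
                  fun h => hw0T (by rw [h]; exact (hQT p hp).2)⟩)
        have hle := hPmax _ hQ2M
        omega
      have hcenter : ∃ z, (z ∈ U ∨ z ∈ W) ∧
          ∀ u ∈ U, ∀ w ∈ W, G.Adj u w → z = u ∨ z = w := by
        by_cases hcr : ∃ u ∈ U, ∃ w ∈ W, G.Adj u w
        · obtain ⟨u0, hu0, w0, hw0, hA0⟩ := hcr
          by_cases hu : ∀ u ∈ U, ∀ w ∈ W, G.Adj u w → u = u0
          · exact ⟨u0, Or.inl hu0, fun u hu' w hw' hA => Or.inl (hu u hu' w hw' hA).symm⟩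
          · by_cases hw : ∀ u ∈ U, ∀ w ∈ W, G.Adj u w → w = w0
            · exact ⟨w0, Or.inr hw0, fun u hu' w hw' hA => Or.inr (hw u hu' w hw' hA).symm⟩
            · exfalso
              push_neg at hu hw
              obtain ⟨u1, hu1, w1, hw1, hA1, hu1ne⟩ := hu
              obtain ⟨u2, hu2, w2, hw2, hA2, hw2ne⟩ := hw
              have hww1 : w1 = w0 := by
                by_contra hne
                exact F1 u0 hu0 u1 hu1 w0 hw0 w1 hw1 (fun h => hu1ne h.symm)
                  (fun h => hne h.symm) hA0 hA1
              have huu2 : u2 = u0 := by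
                by_contra hne
                exact F1 u0 hu0 u2 hu2 w0 hw0 w2 hw2 (fun h => hne h.symm)
                  (fun h => hw2ne h.symm) hA0 hA2
              have hA1' : G.Adj u1 w0 := by rw [← hww1]; exact hA1
              have hA2' : G.Adj u0 w2 := by rw [← huu2]; exact hA2
              exact F1 u1 hu1 u0 hu0 w0 hw0 w2 hw2 hu1ne (fun h => hw2ne h.symm) hA1' hA2' 
        · push_neg at hcr
          have hWne : W.Nonempty := by
            rw [← Finset.card_pos, hWcard]; omega
          obtain ⟨w, hw⟩ := hWne
          exact ⟨w, Or.inr hw, fun u hu' w' hw' hA => absurd hA (hcr u hu' w' hw')⟩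
      obtain ⟨z, hzmem, hz⟩ := hcenter
      have hUne : U.Nonempty := Finset.card_pos.1 (by omega)
      rcases hzmem with hzU | hzW
      · -- z ∈ U
        have hzUW : z ∉ W := (hUmem z).1 hzU
        have hiso : ∀ u ∈ U, u ≠ z → ∀ x, x ≠ u → ¬G.Adj u x := by
          intro u hu huz x hxu hA
          by_cases hxW : x ∈ W
          · rcases hz u hu x hxW hA with h | h
            · exact huz h.symm
            · exact hzUW (h ▸ hxW)
          · exact hUindep u hu x ((hUmem x).2 hxW) hA
        have hisoc : ∀ u ∈ U, u ≠ z → ∀ x, x ≠ u → Gᶜ.Adj u x := by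
          intro u hu huz x hxu
          exact (SimpleGraph.compl_adj G u x).2 ⟨Ne.symm hxu, hiso u hu huz x hxu⟩
        obtain ⟨u1, hu1e⟩ := Finset.card_pos.1
          (by rw [Finset.card_erase_of_mem hzU]; omega : 0 < (U.erase z).card)
        have hu1U : u1 ∈ U := Finset.mem_of_mem_erase hu1e
        have hu1z : u1 ≠ z := Finset.ne_of_mem_erase hu1e
        by_cases hzc : ∃ w ∈ W, Gᶜ.Adj z w
        · obtain ⟨ws, hwsW, hzws⟩ := hzc
          obtain ⟨w', hw'e⟩ := Finset.card_pos.1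
            (by rw [Finset.card_erase_of_mem hwsW, hWcard]; omega :
              0 < (W.erase ws).card)
          have hw'W : w' ∈ W := Finset.mem_of_mem_erase hw'e
          have hw'ws : w' ≠ ws := Finset.ne_of_mem_erase hw'e
          have hu1w' : Gᶜ.Adj u1 w' := hisoc u1 hu1U hu1z w' (Ne.symm (hUW u1 hu1U w' hw'W))
          obtain ⟨hM2, hc2⟩ := isM_two Gᶜ hzws hu1w' (Ne.symm hu1z) (hUW z hzU w' hw'W)
            (Ne.symm (hUW u1 hu1U ws hwsW)) (Ne.symm hw'ws)
          by_cases hu3 : U.card = 3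
          · -- need the w'' variant; here ν ≥ 2 since n ≥ 28
            have hν2 : 2 ≤ P.card := by omega
            obtain ⟨w'', hw''e⟩ := Finset.card_pos.1
              (by rw [Finset.card_erase_of_mem (Finset.mem_erase.2 ⟨hw'ws, hw'W⟩),
                    Finset.card_erase_of_mem hwsW, hWcard]; omega :
                0 < ((W.erase ws).erase w').card)
            have hw''W : w'' ∈ W :=
              Finset.mem_of_mem_erase (Finset.mem_of_mem_erase hw''e)
            have hw''w' : w'' ≠ w' := Finset.ne_of_mem_erase hw''e
            have hw''ws : w'' ≠ ws :=
              Finset.ne_of_mem_erase (Finset.mem_of_mem_erase hw''e)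
            set S : Finset V := insert w'' ((U.erase z).erase u1) with hSdef
            have hw''nS : w'' ∉ (U.erase z).erase u1 := fun h =>
              ((hUmem w'').1 (Finset.mem_of_mem_erase (Finset.mem_of_mem_erase h))) hw''W
            have hScard : S.card = U.card - 1 := by
              rw [hSdef, Finset.card_insert_of_notMem hw''nS,
                Finset.card_erase_of_mem hu1e, Finset.card_erase_of_mem hzU]
              omega
            have hSmemU : ∀ a ∈ (U.erase z).erase u1, a ∈ U ∧ a ≠ z ∧ a ≠ u1 := by
              intro a ha
              exact ⟨Finset.mem_of_mem_erase (Finset.mem_of_mem_erase ha),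
                Finset.ne_of_mem_erase (Finset.mem_of_mem_erase ha),
                Finset.ne_of_mem_erase ha⟩
            have hSclq : ∀ a ∈ S, ∀ b ∈ S, a ≠ b → Gᶜ.Adj a b := by
              intro a ha b hb hab
              rw [hSdef, Finset.mem_insert] at ha hb
              rcases ha with rfl | ha <;> rcases hb with rfl | hb
              · exact absurd rfl hab
              · obtain ⟨hbU, hbz, _⟩ := hSmemU b hb
                exact (hisoc b hbU hbz a hab).symm
              · obtain ⟨haU, haz, _⟩ := hSmemU a ha
                exact hisoc a haU haz b (Ne.symm hab)
              · obtain ⟨haU, _, _⟩ := hSmemU a ha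
                obtain ⟨hbU, _, _⟩ := hSmemU b hb
                exact hUclique a haU b hbU hab
            have hkey := fracNu_ge Gᶜ {(z, ws), (u1, w')} S hM2.1 hM2.2
              (by rw [hScard]; omega) hSclq
              (by intro p hp
                  have hmm : ∀ t, t ∈ S → t = w'' ∨ (t ∈ U ∧ t ≠ z ∧ t ≠ u1) := by
                    intro t ht
                    rw [hSdef, Finset.mem_insert] at ht
                    rcases ht with rfl | ht
                    · exact Or.inl rfl
                    · exact Or.inr (hSmemU t ht)
                  rcases Finset.mem_insert.1 hp with rfl | hp
                  · constructor
                    · intro h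
                      rcases hmm _ h with h' | h'
                      · exact hUW z hzU w'' hw''W h'
                      · exact h'.2.1 rfl
                    · intro h
                      rcases hmm _ h with h' | h'
                      · exact hw''ws h'.symm
                      · exact ((hUmem ws).1 h'.1) hwsW
                  · rw [Finset.mem_singleton] at hp; subst hp
                    constructor
                    · intro h
                      rcases hmm _ h with h' | h'
                      · exact hUW u1 hu1U w'' hw''W h'
                      · exact h'.2.2 rfl
                    · intro h
                      rcases hmm _ h with h' | h'
                      · exact hw''w' h'.symm
                      · exact ((hUmem w').1 h'.1) hw'W)
            rw [hc2] at hkey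
            have hScast : ((S.card : ℕ) : ℝ) = (U.card : ℝ) - 1 := by
              rw [hScard]; push_cast [show 1 ≤ U.card by omega]; ring
            rw [hScast] at hkey
            push_cast at hkey
            linarith
          · -- u ≠ 3 : basic S
            set S : Finset V := (U.erase z).erase u1 with hSdef
            have hScard : S.card = U.card - 2 := by
              rw [hSdef, Finset.card_erase_of_mem hu1e, Finset.card_erase_of_mem hzU]
              omega
            have hSmemU : ∀ a ∈ S, a ∈ U ∧ a ≠ z ∧ a ≠ u1 := by
              intro a ha
              exact ⟨Finset.mem_of_mem_erase (Finset.mem_of_mem_erase ha),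
                Finset.ne_of_mem_erase (Finset.mem_of_mem_erase ha),
                Finset.ne_of_mem_erase ha⟩
            have hSclq : ∀ a ∈ S, ∀ b ∈ S, a ≠ b → Gᶜ.Adj a b := by
              intro a ha b hb hab
              exact hUclique a (hSmemU a ha).1 b (hSmemU b hb).1 hab
            have hkey := fracNu_ge Gᶜ {(z, ws), (u1, w')} S hM2.1 hM2.2
              (by rw [hScard]; omega) hSclq
              (by intro p hp
                  rcases Finset.mem_insert.1 hp with rfl | hp
                  · exact ⟨fun h => (hSmemU _ h).2.1 rfl,
                      fun h => ((hUmem ws).1 (hSmemU _ h).1) hwsW⟩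
                  · rw [Finset.mem_singleton] at hp; subst hp
                    exact ⟨fun h => (hSmemU _ h).2.2 rfl,
                      fun h => ((hUmem w').1 (hSmemU _ h).1) hw'W⟩)
            rw [hc2] at hkey
            have hScast : ((S.card : ℕ) : ℝ) = (U.card : ℝ) - 2 := by
              rw [hScard]; push_cast [show 2 ≤ U.card by omega]; ring
            rw [hScast] at hkey
            push_cast at hkey
            linarith
        · -- z adjacent in G to all of W
          push_neg at hzc
          have hzG : ∀ w ∈ W, G.Adj z w := by
            intro w hw
            by_contra hc
            exact hzc w hw ((SimpleGraph.compl_adj G z w).2 ⟨hUW z hzU w hw, hc⟩)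
          rcases Nat.lt_or_ge U.card 3 with hu3 | hu3
          · -- u = 2 : Gᶜ is a star centered u1, contradiction
            have hu2' : U.card = 2 := by omega
            exfalso
            apply hsGc
            have hUsub : ∀ x ∈ U, x = z ∨ x = u1 := by
              intro x hx
              by_contra hcon
              push_neg at hcon
              have : 2 < U.card := by
                have h3 : ({z, u1, x} : Finset V) ⊆ U := by
                  intro t ht
                  simp only [Finset.mem_insert, Finset.mem_singleton] at ht
                  rcases ht with rfl | rfl | rfl
                  · exact hzU
                  · exact hu1U
                  · exact hx
                have hc3 : ({z, u1, x} : Finset V).card = 3 := by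
                  rw [Finset.card_insert_of_notMem (by simp [Ne.symm hu1z, Ne.symm hcon.1]),
                    Finset.card_insert_of_notMem (by simp [Ne.symm hcon.2]),
                    Finset.card_singleton]
                have := Finset.card_le_card h3
                omega
              omega
            refine ⟨u1, fun x y => ⟨fun h => ⟨h.ne, ?_⟩, fun h => ?_⟩⟩
            · by_contra hcon
              push_neg at hcon
              obtain ⟨hxu1, hyu1⟩ := hcon
              have hnadj := ((SimpleGraph.compl_adj G x y).1 h).2
              have hres : ∀ t, t ≠ u1 → t ∈ W ∨ t = z := by
                intro t ht
                by_cases htW : t ∈ W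
                · exact Or.inl htW
                · rcases hUsub t ((hUmem t).2 htW) with rfl | rfl
                  · exact Or.inr rfl
                  · exact absurd rfl ht
              rcases hres x hxu1 with hxW | rfl <;> rcases hres y hyu1 with hyW | rfl
              · exact hnadj (hWclique x hxW y hyW h.ne)
              · exact hnadj (hzG x hxW).symm
              · exact hnadj (hzG y hyW)
              · exact h.ne rfl
            · obtain ⟨hxy, hor⟩ := h
              rcases hor with rfl | rfl
              · exact hisoc x hu1U hu1z y (Ne.symm hxy)
              · exact (hisoc y hu1U hu1z x hxy).symm
          · -- u ≥ 3
            have hWne : W.Nonempty := Finset.card_pos.1 (by rw [hWcard]; omega)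
            obtain ⟨w0, hw0W⟩ := hWne
            -- G side: odd clique W ∪ {z}
            have hSGclq : ∀ a ∈ insert z W, ∀ b ∈ insert z W, a ≠ b → G.Adj a b := by
              intro a ha b hb hab
              rcases Finset.mem_insert.1 ha with rfl | haW <;>
                rcases Finset.mem_insert.1 hb with rfl | hbW
              · exact absurd rfl hab
              · exact hzG b hbW
              · exact (hzG a haW).symm
              · exact hWclique a haW b hbW hab
            have hSGcard : (insert z W).card = 2 * P.card + 1 := by
              rw [Finset.card_insert_of_notMem hzUW, hWcard]
            have hGge := nu_ge_clique G (insert z W) (by rw [hSGcard]; omega) hSGclq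
            rw [hSGcard] at hGge
            -- Gᶜ side
            have hzu1 : Gᶜ.Adj z u1 := (hisoc u1 hu1U hu1z z (Ne.symm hu1z)).symm
            set S : Finset V := insert w0 ((U.erase z).erase u1) with hSdef
            have hw0nS : w0 ∉ (U.erase z).erase u1 := fun h =>
              ((hUmem w0).1 (Finset.mem_of_mem_erase (Finset.mem_of_mem_erase h))) hw0W
            have hScard : S.card = U.card - 1 := by
              rw [hSdef, Finset.card_insert_of_notMem hw0nS,
                Finset.card_erase_of_mem hu1e, Finset.card_erase_of_mem hzU]
              omega
            have hSmemU : ∀ a ∈ (U.erase z).erase u1, a ∈ U ∧ a ≠ z ∧ a ≠ u1 := by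
              intro a ha
              exact ⟨Finset.mem_of_mem_erase (Finset.mem_of_mem_erase ha),
                Finset.ne_of_mem_erase (Finset.mem_of_mem_erase ha),
                Finset.ne_of_mem_erase ha⟩
            have hSclq : ∀ a ∈ S, ∀ b ∈ S, a ≠ b → Gᶜ.Adj a b := by
              intro a ha b hb hab
              rw [hSdef, Finset.mem_insert] at ha hb
              rcases ha with rfl | ha <;> rcases hb with rfl | hb
              · exact absurd rfl hab
              · obtain ⟨hbU, hbz, _⟩ := hSmemU b hb
                exact (hisoc b hbU hbz a hab).symm
              · obtain ⟨haU, haz, _⟩ := hSmemU a ha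
                exact hisoc a haU haz b (Ne.symm hab)
              · exact hUclique a (hSmemU a ha).1 b (hSmemU b hb).1 hab
            have hkey := fracNu_ge Gᶜ {(z, u1)} S
              (by intro p hp; rw [Finset.mem_singleton] at hp; subst hp; exact hzu1)
              ((isM_pair Gᶜ hzu1).2)
              (by rw [hScard]; omega) hSclq
              (by intro p hp
                  rw [Finset.mem_singleton] at hp; subst hp
                  refine ⟨?_, ?_⟩ <;> rw [hSdef, Finset.mem_insert] <;> rintro (h | h)
                  · exact hUW z hzU w0 hw0W h
                  · exact (hSmemU _ h).2.1 rfl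
                  · exact hUW u1 hu1U w0 hw0W h
                  · exact (hSmemU _ h).2.2 rfl)
            rw [Finset.card_singleton] at hkey
            have hScast : ((S.card : ℕ) : ℝ) = (U.card : ℝ) - 1 := by
              rw [hScard]; push_cast [show 1 ≤ U.card by omega]; ring
            rw [hScast] at hkey
            push_cast at hGge
            push_cast at hkey
            linarith
      · -- z ∈ W
        have hcrossW : ∀ u ∈ U, ∀ w ∈ W, w ≠ z → Gᶜ.Adj u w := by
          intro u hu w hw hwz
          refine (SimpleGraph.compl_adj G u w).2 ⟨hUW u hu w hw, fun hA => ?_⟩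
          rcases hz u hu w hw hA with h | h
          · exact ((hUmem u).1 hu) (h ▸ hzW)
          · exact hwz h.symm
        rcases Nat.lt_or_ge P.card 2 with hv2 | hv2
        · -- ν = 1
          have hνone : P.card = 1 := by omega
          have hWe1 : (W.erase z).card = 1 := by
            rw [Finset.card_erase_of_mem hzW, hWcard]; omega
          obtain ⟨b0, hb0⟩ := Finset.card_eq_one.1 hWe1
          have hb0m : b0 ∈ W.erase z := by rw [hb0]; exact Finset.mem_singleton_self b0
          have hb0W : b0 ∈ W := Finset.mem_of_mem_erase hb0m
          have hb0z : b0 ≠ z := Finset.ne_of_mem_erase hb0m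
          by_cases hustar : ∀ u ∈ U, G.Adj z u
          · exfalso
            apply hsG
            refine ⟨z, fun x y => ⟨fun h => ⟨h.ne, ?_⟩, fun h => ?_⟩⟩
            · by_contra hcon
              push_neg at hcon
              obtain ⟨hxz, hyz⟩ := hcon
              by_cases hxW : x ∈ W <;> by_cases hyW : y ∈ W
              · have hx' : x = b0 := by
                  have hh : x ∈ W.erase z := Finset.mem_erase.2 ⟨hxz, hxW⟩
                  rw [hb0] at hh; exact Finset.mem_singleton.1 hh
                have hy' : y = b0 := by
                  have hh : y ∈ W.erase z := Finset.mem_erase.2 ⟨hyz, hyW⟩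
                  rw [hb0] at hh; exact Finset.mem_singleton.1 hh
                exact h.ne (hx'.trans hy'.symm)
              · have hyU : y ∈ U := (hUmem y).2 hyW
                rcases hz y hyU x hxW h.symm with h' | h'
                · exact hyz h'.symm
                · exact hxz h'.symm
              · have hxU : x ∈ U := (hUmem x).2 hxW
                rcases hz x hxU y hyW h with h' | h'
                · exact hxz h'.symm
                · exact hyz h'.symm
              · exact hUindep x ((hUmem x).2 hxW) y ((hUmem y).2 hyW) h
            · obtain ⟨hxy, hor⟩ := h
              rcases hor with rfl | rfl
              · by_cases hyW : y ∈ W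
                · exact hWclique x hzW y hyW hxy
                · exact hustar y ((hUmem y).2 hyW)
              · by_cases hxW : x ∈ W
                · exact (hWclique y hzW x hxW (Ne.symm hxy)).symm
                · exact (hustar x ((hUmem x).2 hxW)).symm
          · push_neg at hustar
            obtain ⟨us, husU, husn⟩ := hustar
            have hzus : Gᶜ.Adj z us := (SimpleGraph.compl_adj G z us).2
              ⟨Ne.symm (hUW us husU z hzW), husn⟩
            obtain ⟨u', hu'e⟩ := Finset.card_pos.1
              (by rw [Finset.card_erase_of_mem husU]; omega : 0 < (U.erase us).card)
            have hu'U : u' ∈ U := Finset.mem_of_mem_erase hu'e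
            have hu'us : u' ≠ us := Finset.ne_of_mem_erase hu'e
            have hb0u' : Gᶜ.Adj b0 u' := (hcrossW u' hu'U b0 hb0W hb0z).symm
            obtain ⟨hM2, hc2⟩ := isM_two Gᶜ hzus hb0u' (Ne.symm hb0z)
              (Ne.symm (hUW u' hu'U z hzW)) (hUW us husU b0 hb0W) (Ne.symm hu'us)
            set S : Finset V := (U.erase us).erase u' with hSdef
            have hScard : S.card = U.card - 2 := by
              rw [hSdef, Finset.card_erase_of_mem hu'e, Finset.card_erase_of_mem husU]
              omega
            have hSmemU : ∀ a ∈ S, a ∈ U ∧ a ≠ us ∧ a ≠ u' := by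
              intro a ha
              exact ⟨Finset.mem_of_mem_erase (Finset.mem_of_mem_erase ha),
                Finset.ne_of_mem_erase (Finset.mem_of_mem_erase ha),
                Finset.ne_of_mem_erase ha⟩
            have hSclq : ∀ a ∈ S, ∀ b ∈ S, a ≠ b → Gᶜ.Adj a b := by
              intro a ha b hb hab
              exact hUclique a (hSmemU a ha).1 b (hSmemU b hb).1 hab
            have hkey := fracNu_ge Gᶜ {(z, us), (b0, u')} S hM2.1 hM2.2
              (by rw [hScard]; omega) hSclq
              (by intro p hp
                  rcases Finset.mem_insert.1 hp with rfl | hp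
                  · exact ⟨fun h => ((hUmem z).1 (hSmemU _ h).1) hzW,
                      fun h => (hSmemU _ h).2.1 rfl⟩
                  · rw [Finset.mem_singleton] at hp; subst hp
                    exact ⟨fun h => ((hUmem b0).1 (hSmemU _ h).1) hb0W,
                      fun h => (hSmemU _ h).2.2 rfl⟩)
            rw [hc2] at hkey
            have hScast : ((S.card : ℕ) : ℝ) = (U.card : ℝ) - 2 := by
              rw [hScard]; push_cast [show 2 ≤ U.card by omega]; ring
            rw [hScast] at hkey
            push_cast at hkey
            linarith
        · -- ν ≥ 2
          obtain ⟨w2, hw2e, w3, hw3e, hw23⟩ := Finset.one_lt_card.1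
            (by rw [Finset.card_erase_of_mem hzW, hWcard]; omega :
              1 < (W.erase z).card)
          have hw2W : w2 ∈ W := Finset.mem_of_mem_erase hw2e
          have hw2z : w2 ≠ z := Finset.ne_of_mem_erase hw2e
          have hw3W : w3 ∈ W := Finset.mem_of_mem_erase hw3e
          have hw3z : w3 ≠ z := Finset.ne_of_mem_erase hw3e
          obtain ⟨u0, hu0U⟩ := hUne
          have hadj03 : Gᶜ.Adj u0 w3 := hcrossW u0 hu0U w3 hw3W hw3z
          set S : Finset V := insert w2 (U.erase u0) with hSdef
          have hw2nU : w2 ∉ U.erase u0 := fun h =>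
            ((hUmem w2).1 (Finset.mem_of_mem_erase h)) hw2W
          have hScard : S.card = U.card := by
            rw [hSdef, Finset.card_insert_of_notMem hw2nU,
              Finset.card_erase_of_mem hu0U]
            omega
          have hSclq : ∀ a ∈ S, ∀ b ∈ S, a ≠ b → Gᶜ.Adj a b := by
            intro a ha b hb hab
            rw [hSdef, Finset.mem_insert] at ha hb
            rcases ha with rfl | ha <;> rcases hb with rfl | hb
            · exact absurd rfl hab
            · exact (hcrossW b (Finset.mem_of_mem_erase hb) a hw2W hw2z).symm
            · exact hcrossW a (Finset.mem_of_mem_erase ha) b hw2W hw2z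
            · exact hUclique a (Finset.mem_of_mem_erase ha) b (Finset.mem_of_mem_erase hb) hab
          have hkey := fracNu_ge Gᶜ {(u0, w3)} S
            (by intro p hp; rw [Finset.mem_singleton] at hp; subst hp; exact hadj03)
            ((isM_pair Gᶜ hadj03).2)
            (by rw [hScard]; omega) hSclq
            (by intro p hp; rw [Finset.mem_singleton] at hp; subst hp
                constructor
                · intro h
                  rw [hSdef, Finset.mem_insert] at h
                  rcases h with h | h
                  · exact hUW u0 hu0U w2 hw2W h
                  · exact (Finset.ne_of_mem_erase h) rfl
                · intro h
                  rw [hSdef, Finset.mem_insert] at h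
                  rcases h with h | h
                  · exact hw23 h.symm
                  · exact ((hUmem w3).1 (Finset.mem_of_mem_erase h)) hw3W)
          rw [Finset.card_singleton] at hkey
          have hScast : ((S.card : ℕ) : ℝ) = (U.card : ℝ) := by rw [hScard]
          rw [hScast] at hkey
          push_cast at hkey
          linarith



end FracNG

theorem stmt_15 {V : Type*} [Fintype V] (G : SimpleGraph V)
    (hn : 28 ≤ Fintype.card V)
    (hG : G.edgeSet.Nonempty) (hGc : Gᶜ.edgeSet.Nonempty) :
    G.fracNu + Gᶜ.fracNu ≥ ((Fintype.card V : ℝ) + 1) / 2 ∧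
    (G.fracNu + Gᶜ.fracNu = ((Fintype.card V : ℝ) + 1) / 2 ↔
      (∃ v : V, ∀ x y : V, G.Adj x y ↔ (x ≠ y ∧ (x = v ∨ y = v))) ∨
      (∃ v : V, ∀ x y : V, Gᶜ.Adj x y ↔ (x ≠ y ∧ (x = v ∨ y = v)))) := by
  classical
  have hstar_eq : (FracNG.IsStar G ∨ FracNG.IsStar Gᶜ) →
      G.fracNu + Gᶜ.fracNu = ((Fintype.card V : ℝ) + 1) / 2 := by
    rintro (⟨v, hv⟩ | ⟨v, hv⟩)
    · exact FracNG.star_sum G hn v hv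
    · have h := FracNG.star_sum Gᶜ hn v hv
      rw [compl_compl] at h
      linarith
  have hn' : (28 : ℝ) ≤ (Fintype.card V : ℝ) := by exact_mod_cast hn
  constructor
  · by_cases h1 : FracNG.IsStar G
    · rw [ge_iff_le, hstar_eq (Or.inl h1)]
    · by_cases h2 : FracNG.IsStar Gᶜ
      · rw [ge_iff_le, hstar_eq (Or.inr h2)]
      · have := FracNG.master G hn hG hGc h1 h2
        rw [ge_iff_le]
        linarith
  · constructor
    · intro heq
      by_contra hcon
      rw [not_or] at hcon
      have h1 : ¬ FracNG.IsStar G := hcon.1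
      have h2 : ¬ FracNG.IsStar Gᶜ := hcon.2
      have := FracNG.master G hn hG hGc h1 h2
      rw [heq] at this
      linarith
    · exact hstar_eq
end

section
/- For any graph G of order n ≥ 2, α'(G) + α'(complement of G) ≥ n/2, with equality if and only if G is an empty graph or a complete graph. -/
open Finset
open scoped Classical

/-!
Putting weight `1/(n-1)` on every edge gives a fractional matching of `G` and one of `Gᶜ`, since
degrees are at most `n - 1`; as every vertex has `n - 1` incident edges in `G` and `Gᶜ` together,
the two weights add up to `n/2`. If `G` is neither empty nor complete, then `G` or `Gᶜ` has an
edge whose endpoints are both non-universal there (a universal vertex of `G` leaves no isolated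
vertex in `G`, hence no universal vertex in `Gᶜ`); both endpoints then have room for another
`1/(n-1)`, which can be put on that edge, so the bound is strict. Conversely `α'(K̄ₙ) = 0` and
`α'(Kₙ) ≤ n/2`.
-/

open Finset

namespace SimpleGraph

variable {V : Type*} [Fintype V] {G : SimpleGraph V} {f : Sym2 V → ℝ}

theorem sum_vertexWeight (G : SimpleGraph V) (f : Sym2 V → ℝ) :
    ∑ v, G.vertexWeight f v = 2 * G.fracWeight f := by
  simp_rw [vertexWeight, fracWeight, incidenceFinset_eq_filter, sum_filter]
  rw [sum_comm, mul_sum]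
  refine sum_congr rfl fun e he => ?_
  have hends : ({v | v ∈ e} : Finset V) = e.toFinset := by ext; simp
  rw [← sum_filter, sum_const, nsmul_eq_mul, hends,
    Sym2.card_toFinset_of_not_isDiag e (G.not_isDiag_of_mem_edgeFinset he)]
  norm_num

theorem isFracMatching_of_nonneg (h₀ : ∀ e, 0 ≤ f e) (hsupp : ∀ e ∉ G.edgeSet, f e = 0)
    (hv : ∀ v, G.vertexWeight f v ≤ 1) : G.IsFracMatching f := by
  refine ⟨fun e => ⟨h₀ e, ?_⟩, hsupp, hv⟩
  by_cases he : e ∈ G.edgeSet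
  · induction e using Sym2.ind with | _ a b => ?_
    calc f s(a, b) ≤ G.vertexWeight f a :=
          single_le_sum (fun e _ => h₀ e) (by simpa using he)
      _ ≤ 1 := hv a
  · simp [hsupp e he]

theorem IsFracMatching.fracWeight_le (hf : G.IsFracMatching f) :
    G.fracWeight f ≤ Fintype.card V / 2 := by
  have : ∑ v, G.vertexWeight f v ≤ ∑ _v : V, 1 := sum_le_sum fun v _ => hf.2.2 v
  rw [sum_vertexWeight, sum_const, card_univ, nsmul_one] at this
  linarith

theorem isFracMatching_zero (G : SimpleGraph V) : G.IsFracMatching 0 :=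
  isFracMatching_of_nonneg (fun _ => le_rfl) (fun _ _ => rfl) fun v => by simp [vertexWeight]

theorem bddAbove_fracWeight (G : SimpleGraph V) :
    BddAbove {x : ℝ | ∃ f, G.IsFracMatching f ∧ G.fracWeight f = x} :=
  ⟨Fintype.card V / 2, fun _ ⟨_, hf, hx⟩ => hx ▸ hf.fracWeight_le⟩

theorem IsFracMatching.fracWeight_le_fracNu (hf : G.IsFracMatching f) :
    G.fracWeight f ≤ G.fracNu :=
  le_csSup G.bddAbove_fracWeight ⟨f, hf, rfl⟩

theorem fracNu_le_half_card (G : SimpleGraph V) : G.fracNu ≤ Fintype.card V / 2 :=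
  csSup_le ⟨0, 0, G.isFracMatching_zero, by simp [fracWeight]⟩
    fun _ ⟨_, hf, hx⟩ => hx ▸ hf.fracWeight_le

theorem fracWeight_bot (f : Sym2 V → ℝ) : (⊥ : SimpleGraph V).fracWeight f = 0 :=
  sum_eq_zero fun e he => by simp at he

theorem fracNu_bot : (⊥ : SimpleGraph V).fracNu = 0 := by
  have : {x : ℝ | ∃ f, (⊥ : SimpleGraph V).IsFracMatching f ∧ (⊥ : SimpleGraph V).fracWeight f = x}
      = {0} := by
    ext x
    simp only [fracWeight_bot, Set.mem_ofPred_eq, Set.mem_singleton_iff]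
    exact ⟨fun ⟨_, _, hx⟩ => hx.symm, fun hx => ⟨0, isFracMatching_zero _, hx.symm⟩⟩
  rw [fracNu, this, csSup_singleton]

theorem IsFracMatching.add_single (hf : G.IsFracMatching f) {a b : V} (hab : G.Adj a b)
    {c : ℝ} (hc : 0 ≤ c) (ha : G.vertexWeight f a + c ≤ 1) (hb : G.vertexWeight f b + c ≤ 1) :
    G.IsFracMatching (f + Pi.single s(a, b) c) := by
  refine isFracMatching_of_nonneg
    (fun e => add_nonneg (hf.1 e).1 ((Pi.single_nonneg (α := fun _ => ℝ)).2 hc e))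
    (fun e he => ?_) fun v => ?_
  · rw [Pi.add_apply, hf.2.1 e he, Pi.single_eq_of_ne (by rintro rfl; exact he hab), add_zero]
  · simp only [vertexWeight, Pi.add_apply, sum_add_distrib, sum_pi_single']
    split_ifs with hv
    · obtain rfl | rfl := (G.mk'_mem_incidenceSet_iff.1 (by simpa using hv)).2
      exacts [ha, hb]
    · simpa using hf.2.2 v

theorem fracWeight_add_single {a b : V} (hab : G.Adj a b) (c : ℝ) :
    G.fracWeight (f + Pi.single s(a, b) c) = G.fracWeight f + c := by
  simp only [fracWeight, Pi.add_apply, sum_add_distrib, sum_pi_single']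
  rw [if_pos (by simpa using hab)]

noncomputable def uniformWeight (G : SimpleGraph V) : Sym2 V → ℝ :=
  fun e => if e ∈ G.edgeSet then 1 / (Fintype.card V - 1 : ℕ) else 0

theorem vertexWeight_uniformWeight (G : SimpleGraph V) (v : V) :
    G.vertexWeight G.uniformWeight v = G.degree v / (Fintype.card V - 1 : ℕ) := by
  have : ∀ e ∈ G.incidenceFinset v, G.uniformWeight e = 1 / (Fintype.card V - 1 : ℕ) :=
    fun e he => if_pos (G.incidenceSet_subset v (by simpa using he))
  rw [vertexWeight, sum_congr rfl this, sum_const, card_incidenceFinset_eq_degree, nsmul_eq_mul,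
    mul_one_div]

theorem isFracMatching_uniformWeight (G : SimpleGraph V) : G.IsFracMatching G.uniformWeight := by
  refine isFracMatching_of_nonneg (fun e => ?_) (fun e he => if_neg he) fun v => ?_
  · unfold uniformWeight
    split_ifs <;> positivity
  · rw [vertexWeight_uniformWeight]
    exact div_le_one_of_le₀ (mod_cast Nat.le_sub_one_of_lt (G.degree_lt_card_verts v))
      (Nat.cast_nonneg _)

theorem degree_add_degree_compl (G : SimpleGraph V) (v : V) [Fintype (G.neighborSet v)]
    [Fintype (Gᶜ.neighborSet v)] :
    G.degree v + Gᶜ.degree v = Fintype.card V - 1 := by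
  have : G.degree v < Fintype.card V := by convert G.degree_lt_card_verts v
  rw [degree_compl]
  omega

theorem fracWeight_uniformWeight_add_compl (G : SimpleGraph V) (hn : 2 ≤ Fintype.card V) :
    G.fracWeight G.uniformWeight + Gᶜ.fracWeight Gᶜ.uniformWeight = Fintype.card V / 2 := by
  have hm : ((Fintype.card V - 1 : ℕ) : ℝ) ≠ 0 := by
    norm_cast
    omega
  have hv : ∀ v ∈ univ,
      G.vertexWeight G.uniformWeight v + Gᶜ.vertexWeight Gᶜ.uniformWeight v = 1 := fun v _ => by
    rw [vertexWeight_uniformWeight, vertexWeight_uniformWeight, ← add_div, ← Nat.cast_add,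
      degree_add_degree_compl, div_self hm]
  have := sum_congr rfl hv
  rw [sum_add_distrib, sum_vertexWeight, sum_vertexWeight, sum_const, card_univ, nsmul_one] at this
  linarith

theorem fracWeight_uniformWeight_lt_fracNu {a b : V} (hab : G.Adj a b) (ha : ¬G.IsUniversal a)
    (hb : ¬G.IsUniversal b) : G.fracWeight G.uniformWeight < G.fracNu := by
  set c : ℝ := 1 / (Fintype.card V - 1 : ℕ) with hc_def
  have hroom : ∀ v, ¬G.IsUniversal v → G.vertexWeight G.uniformWeight v + c ≤ 1 := fun v hv => by
    have := (G.degree_lt_card_sub_one v).2 hv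
    rw [vertexWeight_uniformWeight, hc_def, ← add_div, div_le_one (by norm_cast; omega)]
    exact_mod_cast this
  have hc : 0 < c := one_div_pos.2 (by have := (G.degree_lt_card_sub_one a).2 ha; norm_cast; omega)
  calc G.fracWeight G.uniformWeight < G.fracWeight G.uniformWeight + c := lt_add_of_pos_right _ hc
    _ = G.fracWeight (G.uniformWeight + Pi.single s(a, b) c) := (fracWeight_add_single hab c).symm
    _ ≤ G.fracNu := (G.isFracMatching_uniformWeight.add_single hab hc.le (hroom a ha)
      (hroom b hb)).fracWeight_le_fracNu

theorem fracWeight_uniformWeight_lt_fracNu_or_compl (hbot : G ≠ ⊥) (htop : G ≠ ⊤) :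
    G.fracWeight G.uniformWeight < G.fracNu ∨ Gᶜ.fracWeight Gᶜ.uniformWeight < Gᶜ.fracNu := by
  obtain ⟨a, b, hab⟩ := ne_bot_iff_exists_adj.1 hbot
  obtain ⟨x, y, hxy⟩ := ne_bot_iff_exists_adj.1 (compl_eq_bot.not.2 htop)
  by_cases huniv : ∃ u, G.IsUniversal u
  · obtain ⟨u, hu⟩ := huniv
    have := hab.nontrivial
    have hcompl : ∀ w, ¬Gᶜ.IsUniversal w := fun w => by
      rw [isUniversal_compl_iff_isIsolated]
      exact hu.not_isIsolated w
    exact .inr (fracWeight_uniformWeight_lt_fracNu hxy (hcompl x) (hcompl y))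
  · rw [not_exists] at huniv
    exact .inl (fracWeight_uniformWeight_lt_fracNu hab (huniv a) (huniv b))

theorem half_card_le_fracNu_add_fracNu_compl (G : SimpleGraph V) (hn : 2 ≤ Fintype.card V) :
    Fintype.card V / 2 ≤ G.fracNu + Gᶜ.fracNu := by
  rw [← G.fracWeight_uniformWeight_add_compl hn]
  exact add_le_add G.isFracMatching_uniformWeight.fracWeight_le_fracNu
    Gᶜ.isFracMatching_uniformWeight.fracWeight_le_fracNu

theorem half_card_lt_fracNu_add_fracNu_compl (hbot : G ≠ ⊥) (htop : G ≠ ⊤) :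
    Fintype.card V / 2 < G.fracNu + Gᶜ.fracNu := by
  obtain ⟨a, b, hab⟩ := ne_bot_iff_exists_adj.1 hbot
  rw [← G.fracWeight_uniformWeight_add_compl (Fintype.one_lt_card_iff.2 ⟨a, b, hab.ne⟩)]
  rcases fracWeight_uniformWeight_lt_fracNu_or_compl hbot htop with h | h
  · exact add_lt_add_of_lt_of_le h Gᶜ.isFracMatching_uniformWeight.fracWeight_le_fracNu
  · exact add_lt_add_of_le_of_lt G.isFracMatching_uniformWeight.fracWeight_le_fracNu h

theorem fracNu_bot_add_fracNu_top (hn : 2 ≤ Fintype.card V) :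
    (⊥ : SimpleGraph V).fracNu + (⊤ : SimpleGraph V).fracNu = Fintype.card V / 2 := by
  refine le_antisymm ?_ ?_
  · rw [fracNu_bot, zero_add]
    exact fracNu_le_half_card ⊤
  · simpa using half_card_le_fracNu_add_fracNu_compl ⊥ hn

end SimpleGraph

theorem stmt_16 {V : Type*} [Fintype V] (G : SimpleGraph V)
    (hn : 2 ≤ Fintype.card V) :
    G.fracNu + Gᶜ.fracNu ≥ (Fintype.card V : ℝ) / 2 ∧
    (G.fracNu + Gᶜ.fracNu = (Fintype.card V : ℝ) / 2 ↔ G = ⊥ ∨ G = ⊤) := by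
  refine ⟨G.half_card_le_fracNu_add_fracNu_compl hn, fun h => ?_, ?_⟩
  · by_contra! hG
    exact h.not_gt (SimpleGraph.half_card_lt_fracNu_add_fracNu_compl hG.1 hG.2)
  · rintro (rfl | rfl)
    · rw [compl_bot, SimpleGraph.fracNu_bot_add_fracNu_top hn]
    · rw [compl_top, add_comm, SimpleGraph.fracNu_bot_add_fracNu_top hn]
end
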